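/- If a binary word f satisfies f = x·1001·z = y·x·011 for some binary words x, y, z (i.e., f has a 2-tilde-error overlap with block 100 of the special form described), then f is tilde-non-isometric; in particular, α̃ = y·x·0101·z and δ̃ = y·x·1010·z form a pair of tilde-witnesses for f. -/
import Mathlib


/-- Edit operations on binary words: `R i` flips the bit at position `i`,
`S i` swaps the (distinct) bits at positions `i` and `i+1`. Positions are 0-based. -/
inductive TOp where
  | R (i : ℕ)
  | S (i : ℕ)
deriving DecidableEq

namespace TOp

def apply : TOp → List Bool → List Bool
  | R i, w => w.set i (!(w.getD i false))
  | S i, w => (w.set i (w.getD (i+1) false)).set (i+1) (w.getD i false)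

def valid : TOp → List Bool → Prop
  | R i, w => i < w.length
  | S i, w => i + 1 < w.length ∧ w.getD i false ≠ w.getD (i+1) false

/-- The set of positions modified by an operation. -/
def positions : TOp → Finset ℕ
  | R i => {i}
  | S i => {i, i+1}

/-- The (leftmost) position of an operation. -/
def pos : TOp → ℕ
  | R i => i
  | S i => i

def isR : TOp → Prop
  | R _ => True
  | S _ => False

def isS : TOp → Prop
  | R _ => False
  | S _ => True

end TOp

/-- All operations of a sequence are valid when applied successively starting from `w`. -/
def validSeq : List TOp → List Bool → Prop
  | [], _ => True
  | o :: os, w => o.valid w ∧ validSeq os (o.apply w)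

def applySeq : List TOp → List Bool → List Bool
  | [], w => w
  | o :: os, w => applySeq os (o.apply w)

/-- `ops` is a tilde-transformation from `u` to `v`. -/
def Transforms (ops : List TOp) (u v : List Bool) : Prop :=
  validSeq ops u ∧ applySeq ops u = v

/-- The swap-mismatch (tilde) distance between two words. -/
noncomputable def tdist (u v : List Bool) : ℕ :=
  sInf { n | ∃ ops : List TOp, ops.length = n ∧ Transforms ops u v }

/-- Each position of the word is modified at most once along the sequence. -/
def eachPosOnce (ops : List TOp) : Prop :=
  ops.Pairwise fun o o' => Disjoint o.positions o'.positions

/-- A minimal tilde-transformation: length `tdist u v`, each position changed at most once. -/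
def MinimalTransf (ops : List TOp) (u v : List Bool) : Prop :=
  Transforms ops u v ∧ ops.length = tdist u v ∧ eachPosOnce ops

/-- The list of all words `w_0 = u, w_1, …, w_h` visited by the transformation. -/
def trajectory (ops : List TOp) (u : List Bool) : List (List Bool) :=
  List.scanl (fun w o => o.apply w) u ops

/-- `w` avoids `f` as a factor. -/
def FFree (f w : List Bool) : Prop := ¬ f <:+: w

/-- All words along the transformation are `f`-free. -/
def FreeTransf (f : List Bool) (ops : List TOp) (u : List Bool) : Prop :=
  ∀ w ∈ trajectory ops u, FFree f w

/-- `f` is tilde-isometric. -/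
def TildeIsometric (f : List Bool) : Prop :=
  ∀ u v : List Bool, u.length = v.length → f.length < u.length →
    FFree f u → FFree f v →
      ∃ ops : List TOp, MinimalTransf ops u v ∧ FreeTransf f ops u

/-- `(u,v)` is a pair of tilde-witnesses for `f`. -/
def Witnesses (f u v : List Bool) : Prop :=
  u.length = v.length ∧ FFree f u ∧ FFree f v ∧ 2 ≤ tdist u v ∧
    ∀ ops : List TOp, MinimalTransf ops u v → ¬ FreeTransf f ops u

/-- Hamming distance between equal-length words (number of mismatch positions). -/
def hdist (u v : List Bool) : ℕ := ((u.zip v).filter fun p => p.1 != p.2).length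


section Helpers17

lemma st17_getD_app_r (a b : List Bool) (k : ℕ) :
    (a ++ b).getD (a.length + k) false = b.getD k false := by
  induction a with
  | nil => simp
  | cons h t ih => simpa [Nat.succ_add] using ih

lemma st17_getD_app_l (a b : List Bool) (m : ℕ) (h : m < a.length) :
    (a ++ b).getD m false = a.getD m false := by
  induction a generalizing m with
  | nil => simp at h
  | cons hd t ih =>
    cases m with
    | zero => simp
    | succ m =>
      rw [List.cons_append, List.getD_cons_succ, List.getD_cons_succ]
      exact ih m (by simp at h; omega)

lemma st17_set_app_r (a b : List Bool) (k : ℕ) (x : Bool) :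
    (a ++ b).set (a.length + k) x = a ++ b.set k x := by
  induction a with
  | nil => simp
  | cons h t ih => simp [Nat.succ_add, ih]

lemma st17_getD_set_ne (w : List Bool) (i j : ℕ) (x : Bool) (h : i ≠ j) :
    (w.set i x).getD j false = w.getD j false := by
  simp [List.getD_eq_getElem?_getD, List.getElem?_set_ne h]

lemma st17_apply_S_eq (a t : List Bool) (b0 b1 : Bool) :
    (TOp.S a.length).apply (a ++ b0 :: b1 :: t) = a ++ b1 :: b0 :: t := by
  simp only [TOp.apply]
  have g0 : (a ++ b0 :: b1 :: t).getD a.length false = b0 := by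
    simpa using st17_getD_app_r a (b0 :: b1 :: t) 0
  have g1 : (a ++ b0 :: b1 :: t).getD (a.length + 1) false = b1 := by
    simpa using st17_getD_app_r a (b0 :: b1 :: t) 1
  rw [g0, g1]
  have s0 : (a ++ b0 :: b1 :: t).set a.length b1 = a ++ b1 :: b1 :: t := by
    simpa using st17_set_app_r a (b0 :: b1 :: t) 0 b1
  rw [s0]
  simpa using st17_set_app_r a (b1 :: b1 :: t) 1 b0

lemma st17_valid_S (a t : List Bool) (b0 b1 : Bool) (h : b0 ≠ b1) :
    (TOp.S a.length).valid (a ++ b0 :: b1 :: t) := by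
  simp only [TOp.valid]
  have g0 : (a ++ b0 :: b1 :: t).getD a.length false = b0 := by
    simpa using st17_getD_app_r a (b0 :: b1 :: t) 0
  have g1 : (a ++ b0 :: b1 :: t).getD (a.length + 1) false = b1 := by
    simpa using st17_getD_app_r a (b0 :: b1 :: t) 1
  refine ⟨by simp, by rw [g0, g1]; exact h⟩

lemma st17_apply_getD_skip (o : TOp) (w : List Bool) (j : ℕ) (h : j ∉ o.positions) :
    (o.apply w).getD j false = w.getD j false := by
  rcases o with i | i
  · simp [TOp.positions] at h
    simp only [TOp.apply]
    exact st17_getD_set_ne w i j _ (Ne.symm h)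
  · simp [TOp.positions] at h
    simp only [TOp.apply]
    rw [st17_getD_set_ne _ (i+1) j _ (Ne.symm h.2), st17_getD_set_ne _ i j _ (Ne.symm h.1)]

lemma st17_occ {f w : List Bool} (h : f <:+: w) :
    ∃ i, i + f.length ≤ w.length ∧
      ∀ j, j < f.length → w.getD (i + j) false = f.getD j false := by
  obtain ⟨s, t, rfl⟩ := h
  refine ⟨s.length, by simp, fun j hj => ?_⟩
  rw [show s ++ f ++ t = s ++ (f ++ t) by simp, st17_getD_app_r s (f ++ t) j,
    st17_getD_app_l f t j hj]

lemma st17_class (o1 o2 : TOp) (L : ℕ)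
    (k0 : L ∈ o1.positions ∨ L ∈ o2.positions)
    (k1 : L + 1 ∈ o1.positions ∨ L + 1 ∈ o2.positions)
    (k2 : L + 2 ∈ o1.positions ∨ L + 2 ∈ o2.positions)
    (k3 : L + 3 ∈ o1.positions ∨ L + 3 ∈ o2.positions) :
    (o1 = TOp.S L ∧ o2 = TOp.S (L + 2)) ∨ (o1 = TOp.S (L + 2) ∧ o2 = TOp.S L) := by
  rcases o1 with i1 | i1 <;> rcases o2 with i2 | i2 <;>
    simp only [TOp.positions, Finset.mem_insert, Finset.mem_singleton] at k0 k1 k2 k3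
  · exfalso; omega
  · exfalso; omega
  · exfalso; omega
  · have h : (i1 = L ∧ i2 = L + 2) ∨ (i1 = L + 2 ∧ i2 = L) := by omega
    rcases h with ⟨rfl, rfl⟩ | ⟨rfl, rfl⟩
    · exact Or.inl ⟨rfl, rfl⟩
    · exact Or.inr ⟨rfl, rfl⟩

end Helpers17

theorem stmt17 (f x y z : List Bool)
    (h1 : f = x ++ [true, false, false, true] ++ z)
    (h2 : f = y ++ x ++ [false, true, true]) :
    ¬ TildeIsometric f ∧
    Witnesses f (y ++ x ++ [false, true, false, true] ++ z)
                (y ++ x ++ [true, false, true, false] ++ z) := by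
  obtain ⟨U, hUdef⟩ : ∃ w, w = y ++ x ++ [false, true, false, true] ++ z := ⟨_, rfl⟩
  obtain ⟨V, hVdef⟩ : ∃ w, w = y ++ x ++ [true, false, true, false] ++ z := ⟨_, rfl⟩
  rw [← hUdef, ← hVdef]
  have hU1 : U = (y ++ x) ++ (false :: true :: false :: true :: z) := by simp [hUdef]
  have hU2 : U = ((y ++ x) ++ [false, true]) ++ (false :: true :: z) := by simp [hUdef]
  have hU3 : U = ((y ++ x) ++ [false, true, false, true]) ++ z := by simp [hUdef]
  have hV1 : V = (y ++ x) ++ (true :: false :: true :: false :: z) := by simp [hVdef]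
  have hF1 : f = (y ++ x) ++ [false, true, true] := by simp [h2]
  have hF2 : f = ((y ++ x) ++ [false, true]) ++ [true] := by simp [h2]
  have hFx1 : f = x ++ (true :: false :: false :: true :: z) := by simp [h1]
  have hL : (y ++ x).length = y.length + x.length := by simp
  have hfl : f.length = (y ++ x).length + 3 := by rw [hF1]; simp; omega
  have hflx : f.length = x.length + 4 + z.length := by rw [hFx1]; simp; omega
  have hyz : y.length = z.length + 1 := by omega
  have hUlen : U.length = (y ++ x).length + 4 + z.length := by rw [hU3]; simp; omega
  have hVlen : V.length = (y ++ x).length + 4 + z.length := by rw [hV1]; simp; omega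
  have uvalI : ∀ n k, n = (y ++ x).length + k →
      U.getD n false = (false :: true :: false :: true :: z).getD k false := by
    intro n k h; rw [h, hU1]; exact st17_getD_app_r _ _ k
  have vvalI : ∀ n k, n = (y ++ x).length + k →
      V.getD n false = (true :: false :: true :: false :: z).getD k false := by
    intro n k h; rw [h, hV1]; exact st17_getD_app_r _ _ k
  have fvalpI : ∀ n k, n = (y ++ x).length + k →
      f.getD n false = [false, true, true].getD k false := by
    intro n k h; rw [h, hF1]; exact st17_getD_app_r _ _ k
  have fvalxI : ∀ n k, n = x.length + k →
      f.getD n false = (true :: false :: false :: true :: z).getD k false := by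
    intro n k h; rw [h, hFx1]; exact st17_getD_app_r _ _ k
  have ztail : ∀ (c0 c1 c2 c3 : Bool) k,
      (c0 :: c1 :: c2 :: c3 :: z).getD (4 + k) false = z.getD k false := by
    intro c0 c1 c2 c3 k
    simpa using st17_getD_app_r [c0, c1, c2, c3] z k
  have upref : ∀ m, m < (y ++ x).length + 2 → U.getD m false = f.getD m false := by
    intro m hm
    rw [hU2, hF2,
      st17_getD_app_l ((y ++ x) ++ [false, true]) (false :: true :: z) m (by simp; omega),
      st17_getD_app_l ((y ++ x) ++ [false, true]) [true] m (by simp; omega)]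
  have vpref : ∀ m, m < (y ++ x).length → V.getD m false = f.getD m false := by
    intro m hm
    rw [hV1, hF1,
      st17_getD_app_l (y ++ x) (true :: false :: true :: false :: z) m hm,
      st17_getD_app_l (y ++ x) [false, true, true] m hm]
  -- f-freeness of U
  have hfreeU : FFree f U := by
    intro hinf
    obtain ⟨i, hilen, E⟩ := st17_occ hinf
    have hi : i ≤ z.length + 1 := by omega
    rcases Nat.lt_or_ge i 4 with h4 | h4
    · interval_cases i
      · have e := E ((y ++ x).length + 2) (by omega)
        rw [uvalI (0 + ((y ++ x).length + 2)) 2 (by omega),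
          fvalpI ((y ++ x).length + 2) 2 (by omega)] at e
        simp at e
      · have e := E ((y ++ x).length) (by omega)
        rw [uvalI (1 + (y ++ x).length) 1 (by omega),
          fvalpI ((y ++ x).length) 0 (by omega)] at e
        simp at e
      · have e := E x.length (by omega)
        rw [fvalxI x.length 0 (by omega), upref (2 + x.length) (by omega),
          fvalxI (2 + x.length) 2 (by omega)] at e
        simp at e
      · have e := E ((y ++ x).length) (by omega)
        rw [uvalI (3 + (y ++ x).length) 3 (by omega),
          fvalpI ((y ++ x).length) 0 (by omega)] at e
        simp at e
    · have e1 := E ((y ++ x).length) (by omega)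
      rw [uvalI (i + (y ++ x).length) (4 + (i - 4)) (by omega),
        ztail false true false true (i - 4), fvalpI ((y ++ x).length) 0 (by omega)] at e1
      simp at e1
      have e2 := E x.length (by omega)
      rw [fvalxI x.length 0 (by omega), upref (i + x.length) (by omega),
        fvalxI (i + x.length) (4 + (i - 4)) (by omega), ztail true false false true (i - 4)] at e2
      simp [e1] at e2
  -- f-freeness of V
  have hfreeV : FFree f V := by
    intro hinf
    obtain ⟨i, hilen, E⟩ := st17_occ hinf
    have hi : i ≤ z.length + 1 := by omega
    rcases Nat.lt_or_ge i 3 with h3 | h3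
    · interval_cases i
      · have e := E ((y ++ x).length) (by omega)
        rw [vvalI (0 + (y ++ x).length) 0 (by omega),
          fvalpI ((y ++ x).length) 0 (by omega)] at e
        simp at e
      · have e := E ((y ++ x).length + 2) (by omega)
        rw [vvalI (1 + ((y ++ x).length + 2)) 3 (by omega),
          fvalpI ((y ++ x).length + 2) 2 (by omega)] at e
        simp at e
      · have e := E ((y ++ x).length + 1) (by omega)
        rw [vvalI (2 + ((y ++ x).length + 1)) 3 (by omega),
          fvalpI ((y ++ x).length + 1) 1 (by omega)] at e
        simp at e
    · have e1 := E ((y ++ x).length + 1) (by omega)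
      rw [vvalI (i + ((y ++ x).length + 1)) (4 + (i - 3)) (by omega),
        ztail true false true false (i - 3), fvalpI ((y ++ x).length + 1) 1 (by omega)] at e1
      simp at e1
      rcases Nat.lt_or_ge i z.length with hc | hc
      · have e2 := E (x.length + 1) (by omega)
        rw [fvalxI (x.length + 1) 1 (by omega), vpref (i + (x.length + 1)) (by omega),
          fvalxI (i + (x.length + 1)) (4 + (i - 3)) (by omega),
          ztail true false false true (i - 3)] at e2
        simp [e1] at e2
      · have hcc : i = z.length ∨ i = z.length + 1 := by omega
        rcases hcc with h | h <;> subst h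
        · have e2 := E (x.length + 1) (by omega)
          rw [fvalxI (x.length + 1) 1 (by omega),
            vvalI (z.length + (x.length + 1)) 0 (by omega)] at e2
          simp at e2
        · have e2 := E (x.length + 2) (by omega)
          rw [fvalxI (x.length + 2) 2 (by omega),
            vvalI (z.length + 1 + (x.length + 2)) 2 (by omega)] at e2
          simp at e2
  -- the two swap operations
  have happ1 : (TOp.S (y ++ x).length).apply U
      = (y ++ x) ++ (true :: false :: false :: true :: z) := by
    rw [hU1]; exact st17_apply_S_eq (y ++ x) (false :: true :: z) false true
  have hw1 : (y ++ x) ++ (true :: false :: false :: true :: z)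
      = ((y ++ x) ++ [true, false]) ++ (false :: true :: z) := by simp
  have hl2 : ((y ++ x) ++ [true, false]).length = (y ++ x).length + 2 := by simp; omega
  have hl2b : ((y ++ x) ++ [false, true]).length = (y ++ x).length + 2 := by simp; omega
  have happ2 : (TOp.S ((y ++ x).length + 2)).apply
      ((y ++ x) ++ (true :: false :: false :: true :: z)) = V := by
    rw [hw1, ← hl2, st17_apply_S_eq]
    simp [hVdef]
  have hval1 : (TOp.S (y ++ x).length).valid U := by
    rw [hU1]; exact st17_valid_S (y ++ x) (false :: true :: z) false true (by simp)
  have hval2 : (TOp.S ((y ++ x).length + 2)).valid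
      ((y ++ x) ++ (true :: false :: false :: true :: z)) := by
    rw [hw1, ← hl2]; exact st17_valid_S _ z false true (by simp)
  have htrans : Transforms [TOp.S (y ++ x).length, TOp.S ((y ++ x).length + 2)] U V := by
    refine ⟨⟨hval1, ?_, trivial⟩, ?_⟩
    · rw [happ1]; exact hval2
    · simp only [applySeq]
      rw [happ1, happ2]
  have hmem2 : (2 : ℕ) ∈ {n | ∃ ops : List TOp, ops.length = n ∧ Transforms ops U V} :=
    ⟨[TOp.S (y ++ x).length, TOp.S ((y ++ x).length + 2)], rfl, htrans⟩
  have ne0 : U.getD ((y ++ x).length) false ≠ V.getD ((y ++ x).length) false := by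
    rw [uvalI ((y ++ x).length) 0 (by omega), vvalI ((y ++ x).length) 0 (by omega)]; simp
  have ne1 : U.getD ((y ++ x).length + 1) false ≠ V.getD ((y ++ x).length + 1) false := by
    rw [uvalI ((y ++ x).length + 1) 1 (by omega), vvalI ((y ++ x).length + 1) 1 (by omega)]; simp
  have ne2 : U.getD ((y ++ x).length + 2) false ≠ V.getD ((y ++ x).length + 2) false := by
    rw [uvalI ((y ++ x).length + 2) 2 (by omega), vvalI ((y ++ x).length + 2) 2 (by omega)]; simp
  have ne3 : U.getD ((y ++ x).length + 3) false ≠ V.getD ((y ++ x).length + 3) false := by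
    rw [uvalI ((y ++ x).length + 3) 3 (by omega), vvalI ((y ++ x).length + 3) 3 (by omega)]; simp
  have htd : tdist U V = 2 := by
    refine le_antisymm (Nat.sInf_le hmem2) (le_csInf ⟨2, hmem2⟩ ?_)
    rintro n ⟨ops, rfl, htr⟩
    rcases ops with _ | ⟨o, _ | ⟨o', rest⟩⟩
    · exfalso
      have hUV : U = V := htr.2
      exact ne0 (by rw [hUV])
    · exfalso
      have hv : TOp.apply o U = V := htr.2
      have k1 : (y ++ x).length ∈ o.positions := by
        by_contra hc
        have h' := st17_apply_getD_skip o U _ hc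
        rw [hv] at h'
        exact ne0 h'.symm
      have k2 : (y ++ x).length + 2 ∈ o.positions := by
        by_contra hc
        have h' := st17_apply_getD_skip o U _ hc
        rw [hv] at h'
        exact ne2 h'.symm
      rcases o with i | i <;>
        simp only [TOp.positions, Finset.mem_insert, Finset.mem_singleton] at k1 k2 <;> omega
    · simp only [List.length_cons]
      omega
  have hwit5 : ∀ ops : List TOp, MinimalTransf ops U V → ¬ FreeTransf f ops U := by
    rintro ops ⟨htr, hln, -⟩ hfree
    rw [htd] at hln
    obtain ⟨o1, o2, rfl⟩ := List.length_eq_two.mp hln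
    have hv : TOp.apply o2 (TOp.apply o1 U) = V := htr.2
    have key : ∀ j, U.getD j false ≠ V.getD j false → j ∈ o1.positions ∨ j ∈ o2.positions := by
      intro j hj
      by_contra hcc
      push_neg at hcc
      exact hj (by rw [← hv, st17_apply_getD_skip o2 _ j hcc.2, st17_apply_getD_skip o1 _ j hcc.1])
    have k0 := key _ ne0
    have k1 := key _ ne1
    have k2 := key _ ne2
    have k3 := key _ ne3
    have hmid : f <:+: TOp.apply o1 U := by
      rcases st17_class o1 o2 ((y ++ x).length) k0 k1 k2 k3 with ⟨rfl, -⟩ | ⟨rfl, -⟩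
      · rw [happ1]
        exact ⟨y, [], by simp [h1]⟩
      · rw [hU2, ← hl2b, st17_apply_S_eq]
        exact ⟨[], false :: z, by simp [h2]⟩
    have hmemtr : TOp.apply o1 U ∈ trajectory [o1, o2] U := by
      simp [trajectory, List.scanl]
    exact hfree _ hmemtr hmid
  have hUVlen : U.length = V.length := by simp [hUdef, hVdef]
  have hwit : Witnesses f U V := ⟨hUVlen, hfreeU, hfreeV, le_of_eq htd.symm, hwit5⟩
  refine ⟨fun hiso => ?_, hwit⟩
  obtain ⟨ops, hmin, hfr⟩ := hiso U V hUVlen (by omega) hfreeU hfreeV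
  exact hwit5 ops hmin hfr
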